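/- arXiv:2207.06136 — 2 statements merged into one kernel-verified Lean document; each statement's English description precedes it below -/
import Mathlib

section
/- Boldface Σ¹₁-boundedness (the boldface form of the paper's Theorem 2.6): Let X be the Polish space of all functions ℕ × ℕ → Bool (with the product topology, each factor discrete), and for x ∈ X let R_x be the binary relation on ℕ defined by m R_x n iff x (m, n) = true. Let WO ⊆ X be the set of all x such that R_x is a strict well-order of all of ℕ. If A ⊆ X is an analytic set with A ⊆ WO, then the order types of the relations R_x for x ∈ A are bounded strictly below ω₁; that is, there exists an ordinal β < ω₁ such that Ordinal.type R_x < β for every x ∈ A. -/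
/-!
The continuous parametrisation `f` of `A` by Baire space is unravelled into the countable tree of
finite attempts to build a point `w` together with an infinite descending sequence of the relation
coded by `f w`. An infinite branch of this tree would converge to such a pair, by continuity of `f`,
so the tree is well-founded, and being countable it has rank below `ω₁`. Every descending chain of
the relation coded by `f w` is followed by a path in the tree, so the ranks in that relation, and
hence its order type, are bounded by the ranks in the tree.
-/

open MeasureTheory

/-- The set `WO` of all `x : (ℕ × ℕ) → Bool` such that the relation
`R_x := fun m n => x (m, n) = true` is a strict well-order of all of `ℕ`. -/
def WOSet : Set ((ℕ × ℕ) → Bool) :=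
  {x | IsWellOrder ℕ (fun m n => x (m, n) = true)}

open Filter Topology Ordinal Order

theorem List.exists_eq_map_range_of_forall_eq_append {β : Type*} {g : ℕ → List β} {a : ℕ → β}
    (h : ∀ i, g (i + 1) = g i ++ [a i]) :
    ∃ Q : ℕ → β, ∀ i, g i = (List.range ((g 0).length + i)).map Q := by
  refine ⟨fun k => if hk : k < (g 0).length then (g 0)[k] else a (k - (g 0).length), ?_⟩
  intro i
  induction i with
  | zero => exact List.ext_getElem (by simp) fun k hk _ => by simp [hk]
  | succ i ih => rw [h, ih, ← Nat.add_assoc, List.range_succ, List.map_append]; simp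

theorem IsWellFounded.rank_lt_omega_one {α : Type*} [Countable α] (r : α → α → Prop)
    [IsWellFounded α r] (a : α) : rank r a < ω₁ := by
  induction a using IsWellFounded.induction r with
  | ind a ih =>
    rw [rank_eq]
    exact iSup_lt_omega_one fun b => (Cardinal.isSuccLimit_omega 1).succ_lt (ih b b.2)

theorem IsWellFounded.exists_forall_rank_lt_omega_one {α : Type*} [Countable α]
    (r : α → α → Prop) [IsWellFounded α r] : ∃ γ < ω₁, ∀ a, rank r a < γ :=
  ⟨⨆ a, succ (rank r a),
    iSup_lt_omega_one fun a => (Cardinal.isSuccLimit_omega 1).succ_lt (rank_lt_omega_one r a),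
    fun a => (lt_succ _).trans_le (Ordinal.le_iSup _ a)⟩

theorem Ordinal.type_le_of_forall_rank_lt {α : Type*} {r : α → α → Prop} [IsWellOrder α r]
    {o : Ordinal} (h : ∀ a, IsWellFounded.rank r a < o) : type r ≤ o :=
  not_lt.1 fun ho => (h _).ne <| by
    rw [IsWellFounded.rank_eq_typein]; exact (typein_surj r ho).choose_spec

section DescentTree

variable {α : Type*}

def codedRel (x : α × α → Bool) (a b : α) : Prop := x (a, b) = true

/-- The list `[(s₀, t₀), …, (sₖ, tₖ)]` encodes an initial segment `s` of `w` together with a chain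
`tₖ r … r t₀` descending in `r`. -/
def IsDescentApprox (r : α → α → Prop) (w : ℕ → ℕ) (l : List (ℕ × α)) : Prop :=
  l.map Prod.fst = (List.range l.length).map w ∧ (l.map Prod.snd).IsChain (flip r)

theorem isDescentApprox_map_range {r : α → α → Prop} {w : ℕ → ℕ} {Q : ℕ → ℕ × α} {n : ℕ} :
    IsDescentApprox r w ((List.range n).map Q) ↔
      (∀ i < n, (Q i).1 = w i) ∧ ∀ i, i + 1 < n → r (Q (i + 1)).2 (Q i).2 := by
  simp only [IsDescentApprox, List.map_map, List.length_map, List.length_range, List.map_inj_left,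
    List.mem_range, List.isChain_map, List.isChain_range]
  refine and_congr Iff.rfl ⟨fun h i hi => h i (by omega), fun h i hi => h i (by omega)⟩

theorem IsDescentApprox.append_singleton {r : α → α → Prop} {w : ℕ → ℕ} {l : List (ℕ × α)}
    (hl : IsDescentApprox r w l) {b : α} (hb : ∀ q ∈ l.getLast?, r b q.2) :
    IsDescentApprox r w (l ++ [(w l.length, b)]) := by
  obtain ⟨hfst, hsnd⟩ := hl
  refine ⟨by simp [hfst, List.range_succ], ?_⟩
  rw [List.map_append, List.isChain_append]
  refine ⟨hsnd, List.isChain_singleton _, ?_⟩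
  simp only [List.getLast?_map, Option.mem_def, Option.map_eq_some_iff, List.map_cons,
    List.map_nil, List.head?_cons, Option.some.injEq, flip]
  rintro _ ⟨q, hq, rfl⟩ _ rfl
  exact hb q hq

def descentTree (f : (ℕ → ℕ) → α × α → Bool) (l' l : List (ℕ × α)) : Prop :=
  (∃ p, l' = l ++ [p]) ∧ ∃ w, IsDescentApprox (codedRel (f w)) w l'

theorem wellFounded_descentTree {f : (ℕ → ℕ) → α × α → Bool} (hf : Continuous f)
    [∀ w, IsWellFounded α (codedRel (f w))] : WellFounded (descentTree f) := by
  rw [wellFounded_iff_isEmpty_descending_chain]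
  refine ⟨fun ⟨g, hg⟩ => ?_⟩
  choose a ha using fun i => (hg i).1
  choose w hw using fun i => (hg i).2
  obtain ⟨Q, hQ⟩ := List.exists_eq_map_range_of_forall_eq_append ha
  generalize (g 0).length = c at hQ
  simp only [hQ, ← Nat.add_assoc, isDescentApprox_map_range] at hw
  set z : ℕ → ℕ := fun k => (Q k).1
  have hwz : Tendsto w atTop (𝓝 z) := tendsto_pi_nhds.2 fun k => by
    rw [nhds_discrete, tendsto_pure]
    filter_upwards [eventually_ge_atTop k] with i hi using ((hw i).1 k (by omega)).symm
  have hdesc : ∀ k, codedRel (f z) (Q (k + 1)).2 (Q k).2 := by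
    intro k
    have hlim := (((continuous_apply ((Q (k + 1)).2, (Q k).2)).comp hf).tendsto z).comp hwz
    rw [nhds_discrete, tendsto_pure] at hlim
    obtain ⟨i, hi, hik⟩ := (hlim.and (eventually_gt_atTop k)).exists
    exact (hi.symm.trans ((hw i).2 k (by omega)) :)
  obtain ⟨k, hk⟩ := WellFounded.not_rel_apply_succ (r := codedRel (f z)) fun k => (Q k).2
  exact hk (hdesc k)

theorem rank_le_rank_descentTree (f : (ℕ → ℕ) → α × α → Bool) [IsWellFounded _ (descentTree f)]
    (z : ℕ → ℕ) [IsWellFounded α (codedRel (f z))] (a : α) (l : List (ℕ × α)) (k : ℕ)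
    (hl : IsDescentApprox (codedRel (f z)) z (l ++ [(k, a)])) :
    IsWellFounded.rank (codedRel (f z)) a ≤ IsWellFounded.rank (descentTree f) (l ++ [(k, a)]) := by
  induction a using IsWellFounded.induction (codedRel (f z)) generalizing l k with
  | ind a ih =>
    rw [IsWellFounded.rank_eq]
    refine Ordinal.iSup_le fun ⟨b, hba⟩ => succ_le_of_lt ?_
    have hchild := hl.append_singleton (b := b) (by simpa using hba)
    exact (ih b hba _ _ hchild).trans_lt (IsWellFounded.rank_lt_of_rel ⟨⟨_, rfl⟩, z, hchild⟩)

theorem exists_lt_omega_one_forall_rank_lt [Countable α] {f : (ℕ → ℕ) → α × α → Bool}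
    (hf : Continuous f) [∀ w, IsWellFounded α (codedRel (f w))] :
    ∃ γ < ω₁, ∀ w a, IsWellFounded.rank (codedRel (f w)) a < γ := by
  have := IsWellFounded.mk (wellFounded_descentTree hf)
  obtain ⟨γ, hγ, hrank⟩ := IsWellFounded.exists_forall_rank_lt_omega_one (descentTree f)
  refine ⟨γ, hγ, fun w a => ?_⟩
  have hroot : IsDescentApprox (codedRel (f w)) w [(w 0, a)] :=
    IsDescentApprox.append_singleton (l := []) (by simp [IsDescentApprox]) (by simp)
  exact (rank_le_rank_descentTree f w a [] _ hroot).trans_lt (hrank _)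

end DescentTree

/-- Boldface Σ¹₁-boundedness: if `A` is an analytic subset of the Polish space
`(ℕ × ℕ) → Bool` consisting only of codes of well-orders of `ℕ`, then the order
types of the coded well-orders are bounded strictly below `ω₁`. -/
theorem boldface_sigma11_bounding
    (A : Set ((ℕ × ℕ) → Bool)) (hA : AnalyticSet A) (hAWO : A ⊆ WOSet) :
    ∃ β < (Cardinal.aleph 1).ord, ∀ x, ∀ hx : x ∈ A,
      @Ordinal.type ℕ (fun m n => x (m, n) = true) (hAWO hx) < β := by
  rw [AnalyticSet_def] at hA
  rcases hA with rfl | ⟨f, hf, rfl⟩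
  · exact ⟨0, Cardinal.ord_aleph 1 ▸ omega_pos 1, by simp⟩
  have (w : ℕ → ℕ) : IsWellFounded ℕ (codedRel (f w)) := (hAWO ⟨w, rfl⟩).toIsWellFounded
  obtain ⟨γ, hγ, hrank⟩ := exists_lt_omega_one_forall_rank_lt hf
  refine ⟨succ γ, Cardinal.ord_aleph 1 ▸ (Cardinal.isSuccLimit_omega 1).succ_lt hγ, ?_⟩
  intro x hx
  have : IsWellOrder ℕ fun m n => x (m, n) = true := hAWO hx
  obtain ⟨z, rfl⟩ := hx
  exact lt_succ_of_le (type_le_of_forall_rank_lt (hrank z))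
end

section
/- Kunen–Martin theorem (the engine behind the paper's Theorem 2.6): Let R be a binary relation on Baire space ℕ → ℕ such that the set {(x, y) : R x y} is an analytic subset of the product space (ℕ → ℕ) × (ℕ → ℕ), and suppose R is well-founded. Then the ordinal rank of R is strictly less than ω₁; that is, for every x : ℕ → ℕ, the rank of x with respect to R is strictly less than (Cardinal.aleph 1).ord. -/
open MeasureTheory

/-!
Write the graph of `R` as the range of a continuous `f` on Baire space. Pairing each point with a
witness turns `R` into the closed relation `WitnessRel f` on `ℕ → ℕ × ℕ`, whose ranks dominate those
of `R`. For a closed well-founded relation `r` on `ℕ → β` with `β` countable, the `n × n`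
truncations of `r`-descending chains of length `n` form a countable tree, so all of its ranks
are countable. The tree is well-founded: the truncations along an infinite branch converge to an
infinite chain, which is `r`-descending because `r` is closed. Extending a chain ending at `x` to
one ending at `y` with `r y x` descends in the tree, so the rank of `x` is at most that of a node.
-/

open Filter Topology Ordinal

universe u

section Rank

variable {α β : Type u} {r : α → α → Prop} {s : β → β → Prop}

theorem Acc.rank_le_rank_of_simulation (P : α → β → Prop)
    (hP : ∀ a b, P a b → ∀ a', r a' a → ∃ b', P a' b' ∧ s b' b)
    {a : α} {b : β} (ha : Acc r a) (hb : Acc s b) (hab : P a b) : ha.rank ≤ hb.rank := by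
  induction ha generalizing b with
  | intro a _ ih =>
    rw [Acc.rank_eq]
    refine Ordinal.iSup_le fun ⟨a', ha'⟩ => ?_
    obtain ⟨b', hab', hb'⟩ := hP a b hab a' ha'
    exact Order.succ_le_of_lt ((ih a' ha' (hb.inv hb') hab').trans_lt (hb.rank_lt_of_rel hb'))

theorem Acc.rank_lt_omega_one (hr : ∀ a, Countable {b // r b a}) {a : α} (ha : Acc r a) :
    ha.rank < ω₁ := by
  induction ha with
  | intro a _ ih =>
    rw [Acc.rank_eq]
    exact Ordinal.iSup_lt_omega_one fun b => (Cardinal.isSuccLimit_omega 1).succ_lt (ih b b.2)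

end Rank

namespace KunenMartin

variable {β : Type u}

abbrev Node (β : Type u) : Type u := Σ n : ℕ, Fin n → Fin n → β

def trunc (n : ℕ) (d : ℕ → ℕ → β) : Node β := ⟨n, fun i k => d i k⟩

theorem trunc_eq_trunc_iff {n n' : ℕ} {d d' : ℕ → ℕ → β} :
    trunc n d = trunc n' d' ↔ n = n' ∧ ∀ i < n, ∀ k < n, d i k = d' i k := by
  refine ⟨fun h => ?_, fun ⟨hn, h⟩ => ?_⟩
  · obtain ⟨rfl, h⟩ := Sigma.mk.inj_iff.mp h
    exact ⟨rfl, fun i hi k hk => congrFun (congrFun (eq_of_heq h) ⟨i, hi⟩) ⟨k, hk⟩⟩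
  · subst hn
    unfold trunc
    congr
    funext i k
    exact h i i.2 k k.2

def IsDescending (r : (ℕ → β) → (ℕ → β) → Prop) (n : ℕ) (d : ℕ → ℕ → β) : Prop :=
  ∀ i < n, r (d (i + 1)) (d i)

def Extends (r : (ℕ → β) → (ℕ → β) → Prop) (t s : Node β) : Prop :=
  ∃ n d, IsDescending r n d ∧ t = trunc (n + 1) d ∧ s = trunc n d

variable {r : (ℕ → β) → (ℕ → β) → Prop}

theorem exists_extends_of_rel {n : ℕ} {d : ℕ → ℕ → β} (hd : IsDescending r n d) {y : ℕ → β}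
    (hy : r y (d n)) :
    ∃ d', IsDescending r (n + 1) d' ∧ d' (n + 1) = y ∧
      Extends r (trunc (n + 2) d') (trunc (n + 1) d) := by
  set d' := Function.update d (n + 1) y
  have hd'd : ∀ i < n + 1, d' i = d i := fun i hi => Function.update_of_ne hi.ne _ _
  have hd'y : d' (n + 1) = y := Function.update_self ..
  have hd' : IsDescending r (n + 1) d' := by
    intro i hi
    rcases Nat.lt_succ_iff_lt_or_eq.1 hi with hi | rfl
    · rw [hd'd _ (by omega), hd'd _ (by omega)]
      exact hd i hi
    · rw [hd'y, hd'd _ (by omega)]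
      exact hy
  refine ⟨d', hd', hd'y, n + 1, d', hd', rfl, ?_⟩
  exact trunc_eq_trunc_iff.2 ⟨rfl, fun i hi k _ => by rw [hd'd i hi]⟩

variable [TopologicalSpace β]

theorem wellFounded_extends (hr : IsClosed {p : (ℕ → β) × (ℕ → β) | r p.1 p.2})
    (hwf : WellFounded r) : WellFounded (Extends r) := by
  refine wellFounded_iff_isEmpty_descending_chain.2 ⟨fun ⟨t, ht⟩ => ?_⟩
  choose n d hd ht_succ ht using ht
  have hcoh (m : ℕ) :
      n m + 1 = n (m + 1) ∧ ∀ i < n m + 1, ∀ k < n m + 1, d m i k = d (m + 1) i k :=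
    trunc_eq_trunc_iff.1 ((ht_succ m).symm.trans (ht (m + 1)))
  have hn (m : ℕ) : m ≤ n m := by
    induction m with
    | zero => exact Nat.zero_le _
    | succ m ih => rw [← (hcoh m).1]; omega
  have hstable {m m' : ℕ} (hm : m ≤ m') {i k : ℕ} (hi : i ≤ m) (hk : k ≤ m) :
      d m' i k = d m i k := by
    induction m', hm using Nat.le_induction with
    | base => rfl
    | succ m' hm ih =>
      have := hn m'
      rw [← (hcoh m').2 i (by omega) k (by omega), ih]
  set D : ℕ → ℕ → β := fun i k => d (max i k) i k
  have hD {m i k : ℕ} (hi : i ≤ m) (hk : k ≤ m) : d m i k = D i k :=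
    hstable (max_le hi hk) (le_max_left i k) (le_max_right i k)
  refine (wellFounded_iff_isEmpty_descending_chain.1 hwf).false ⟨D, fun i => ?_⟩
  have hlim : Tendsto (fun m => (d (m + i + 1) (i + 1), d (m + i + 1) i)) atTop
      (𝓝 (D (i + 1), D i)) := by
    refine .prodMk_nhds (tendsto_pi_nhds.2 fun k => tendsto_nhds_of_eventually_eq ?_)
      (tendsto_pi_nhds.2 fun k => tendsto_nhds_of_eventually_eq ?_) <;>
    filter_upwards [eventually_ge_atTop k] with m hm <;> exact hD (by omega) (by omega)
  exact hr.mem_of_tendsto hlim (.of_forall fun m => hd _ i (by have := hn (m + i + 1); omega))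

theorem rank_lt_omega_one_of_isClosed [Countable β]
    (hr : IsClosed {p : (ℕ → β) × (ℕ → β) | r p.1 p.2}) (hwf : WellFounded r) (x : ℕ → β) :
    (hwf.apply x).rank < ω₁ := by
  have hT := wellFounded_extends hr hwf
  calc (hwf.apply x).rank ≤ (hT.apply (trunc 1 fun _ => x)).rank := by
        refine Acc.rank_le_rank_of_simulation
          (fun x t => ∃ n d, IsDescending r n d ∧ d n = x ∧ t = trunc (n + 1) d) ?_ _ _
          ⟨0, fun _ => x, fun i hi => absurd hi i.not_lt_zero, rfl, rfl⟩
        rintro _ _ ⟨n, d, hd, rfl, rfl⟩ y hy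
        obtain ⟨d', hd', hy', hext⟩ := exists_extends_of_rel hd hy
        exact ⟨_, ⟨n + 1, d', hd', hy', rfl⟩, hext⟩
    _ < ω₁ := Acc.rank_lt_omega_one (fun _ => inferInstance) _

section Witness

variable {R : (ℕ → ℕ) → (ℕ → ℕ) → Prop} {f : (ℕ → ℕ) → (ℕ → ℕ) × (ℕ → ℕ)}

def WitnessRel (f : (ℕ → ℕ) → (ℕ → ℕ) × (ℕ → ℕ)) (u v : ℕ → ℕ × ℕ) : Prop :=
  f (Prod.snd ∘ u) = (Prod.fst ∘ u, Prod.fst ∘ v)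

theorem isClosed_witnessRel (hf : Continuous f) :
    IsClosed {p : (ℕ → ℕ × ℕ) × (ℕ → ℕ × ℕ) | WitnessRel f p.1 p.2} :=
  isClosed_eq (hf.comp (by fun_prop)) (by fun_prop)

theorem wellFounded_witnessRel (hf : ∀ z, R (f z).1 (f z).2) (hwf : WellFounded R) :
    WellFounded (WitnessRel f) :=
  Subrelation.wf (fun {u v} (h : WitnessRel f u v) =>
      show R (Prod.fst ∘ u) (Prod.fst ∘ v) by simpa only [Prod.ext_iff.1 h] using hf (Prod.snd ∘ u))
    (InvImage.wf (Prod.fst ∘ ·) hwf)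

theorem rank_le_rank_witnessRel (hf : ∀ y x, R y x → ∃ z, f z = (y, x)) (hwf : WellFounded R)
    (hwf' : WellFounded (WitnessRel f)) (u : ℕ → ℕ × ℕ) :
    (hwf.apply (Prod.fst ∘ u)).rank ≤ (hwf'.apply u).rank := by
  refine Acc.rank_le_rank_of_simulation (fun x u => Prod.fst ∘ u = x) ?_ _ _ rfl
  rintro _ u rfl y hy
  obtain ⟨z, hz⟩ := hf y _ hy
  exact ⟨fun k => (y k, z k), rfl, hz⟩

end Witness

end KunenMartin

/-- Kunen–Martin theorem: a well-founded relation `R` on Baire space `ℕ → ℕ` whose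
graph is an analytic subset of the product `(ℕ → ℕ) × (ℕ → ℕ)` has rank strictly
less than `ω₁`: the rank of every point is strictly less than the first
uncountable ordinal. -/
theorem kunen_martin (R : (ℕ → ℕ) → (ℕ → ℕ) → Prop)
    (hanalytic : AnalyticSet {p : (ℕ → ℕ) × (ℕ → ℕ) | R p.1 p.2})
    (hwf : WellFounded R) :
    ∀ x : ℕ → ℕ, (hwf.apply x).rank < (Cardinal.aleph 1).ord := by
  intro x
  rw [Cardinal.ord_aleph]
  rw [AnalyticSet] at hanalytic
  rcases hanalytic with hempty | ⟨f, hf, hrange⟩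
  · exact KunenMartin.rank_lt_omega_one_of_isClosed (hempty ▸ isClosed_empty) hwf x
  · have hwf' := KunenMartin.wellFounded_witnessRel (fun z => hrange.subset ⟨z, rfl⟩) hwf
    calc (hwf.apply x).rank ≤ (hwf'.apply fun k => (x k, 0)).rank :=
          KunenMartin.rank_le_rank_witnessRel (fun y x h => hrange.symm.subset h) hwf hwf' _
      _ < ω₁ :=
        KunenMartin.rank_lt_omega_one_of_isClosed (KunenMartin.isClosed_witnessRel hf) hwf' _
end
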